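/- arXiv:2512.01905 — 5 statements merged into one kernel-verified Lean document; each statement's English description precedes it below -/
import Mathlib

section
/- Let G = G₁ ∪ G₂ be a connected graph where V(G₁) ∩ V(G₂) = {v} and E(G₁) ∩ E(G₂) = ∅. If S is a tough set of G not containing v, then S ⊆ V(G₁) − {v} or S ⊆ V(G₂) − {v}. -/
open SimpleGraph

noncomputable def numComp {V : Type*} (G : SimpleGraph V) (S : Set V) : ℕ :=
  Nat.card (SimpleGraph.induce Sᶜ G).ConnectedComponent

def IsCutset {V : Type*} (G : SimpleGraph V) (S : Set V) : Prop := 1 < numComp G S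

noncomputable def toughness {V : Type*} (G : SimpleGraph V) : ℝ :=
  sInf {r : ℝ | ∃ S : Set V, IsCutset G S ∧ r = (S.ncard : ℝ) / (numComp G S : ℝ)}

def IsToughSet {V : Type*} (G : SimpleGraph V) (S : Set V) : Prop :=
  IsCutset G S ∧ (S.ncard : ℝ) = toughness G * (numComp G S : ℝ)

def MinTough {V : Type*} (G : SimpleGraph V) (t : ℝ) : Prop :=
  toughness G = t ∧ ∀ e ∈ G.edgeSet, toughness (G.deleteEdges {e}) < t

def IsCutVertex {V : Type*} (G : SimpleGraph V) (x : V) : Prop := IsCutset G {x}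

/-!
Suppose `S` meets both sides and put `Sᵢ = S ∩ Aᵢ`. A component of `G - S` avoiding `v` lies
on one side of `v`, so it has no neighbour in the other `Sⱼ` and remains a component of
`G - Sᵢ`; the component of `v` is counted in both `G - S₁` and `G - S₂`. Hence
`c(G - S) + 1 ≤ c(G - S₁) + c(G - S₂)`. If both `Sᵢ` are cutsets, adding `τ c(G - Sᵢ) ≤ |Sᵢ|`
gives `τ (c(G - S) + 1) ≤ |S| = τ c(G - S)`, impossible as `τ > 0`; if `S₂` is not a cutset,
then `c(G - S) ≤ c(G - S₁)` and `τ c(G - S) ≤ |S₁| < |S|`.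
-/

namespace SimpleGraph

variable {V : Type*} {G : SimpleGraph V}

def ConnectedComponent.IsolatedFrom {U : Set V} (C : (G.induce U).ConnectedComponent)
    (T : Set V) : Prop :=
  ∀ x ∈ C.supp, ∀ y ∈ T, ¬ G.Adj x y

lemma ConnectedComponent.exists_mem_supp_of_adj_leaving {T B : Set V} {v : V}
    (hB : ∀ x y, G.Adj x y → x ∈ B → y ∉ B → x = v) (C : (G.induce T).ConnectedComponent)
    {x y : T} (hx : x ∈ C.supp) (hy : y ∈ C.supp) (hxB : x.1 ∈ B) (hyB : y.1 ∉ B) :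
    ∃ hv : v ∈ T, ⟨v, hv⟩ ∈ C.supp := by
  obtain ⟨w⟩ := C.reachable_of_mem_supp hx hy
  obtain ⟨d, hd, hdB, hdB'⟩ := w.exists_boundary_dart (Subtype.val ⁻¹' B) hxB hyB
  obtain rfl : d.fst.1 = v := hB _ _ d.adj hdB hdB'
  obtain ⟨q, -, -⟩ :=
    Walk.mem_support_iff_exists_append.mp (w.dart_fst_mem_support_of_mem_darts hd)
  exact ⟨d.fst.2, (ConnectedComponent.sound q.reachable).symm.trans hx⟩

lemma ConnectedComponent.eq_of_map_induceHomOfLE_eq {U U' : Set V} (h : U ⊆ U')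
    {C D : (G.induce U).ConnectedComponent} (hC : C.IsolatedFrom (U' \ U))
    (hCD : C.map (G.induceHomOfLE h).toHom = D.map (G.induceHomOfLE h).toHom) : C = D := by
  induction C using ConnectedComponent.ind with | h x =>
  induction D using ConnectedComponent.ind with | h y =>
  rw [ConnectedComponent.map_mk, ConnectedComponent.map_mk] at hCD
  obtain ⟨w⟩ := ConnectedComponent.exact hCD
  by_contra hxy
  -- `w` runs in `G.induce U'`; its first step out of the component of `x` would have to
  -- enter `U' \ U`, which `hC` forbids.
  obtain ⟨d, -, ⟨hfst, hfstC⟩, hsnd⟩ := w.exists_boundary_dart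
    {u | ∃ hu : u.1 ∈ U, (G.induce U).connectedComponentMk ⟨u, hu⟩ =
      (G.induce U).connectedComponentMk x}
    ⟨x.2, rfl⟩ (fun ⟨_, hy⟩ => hxy hy.symm)
  by_cases hsndU : d.snd.1 ∈ U
  · exact hsnd ⟨hsndU, (ConnectedComponent.sound (Adj.reachable (G := G.induce U)
      (u := ⟨d.fst, hfst⟩) (v := ⟨d.snd, hsndU⟩) d.adj)).symm.trans hfstC⟩
  · exact hC ⟨d.fst, hfst⟩ hfstC d.snd ⟨d.snd.2, hsndU⟩ d.adj

lemma ncard_insert_isolatedFrom_le [Finite V] {U U' : Set V} (h : U ⊆ U')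
    (C₀ : (G.induce U).ConnectedComponent) :
    (insert C₀ {C : (G.induce U).ConnectedComponent | C.IsolatedFrom (U' \ U)}).ncard ≤
      Nat.card (G.induce U').ConnectedComponent := by
  rw [← Set.ncard_univ]
  refine Set.ncard_le_ncard_of_injOn (ConnectedComponent.map (G.induceHomOfLE h).toHom)
    (fun _ _ => Set.mem_univ _) ?_ Set.finite_univ
  rintro C (rfl | hC) D (rfl | hD) hCD
  · rfl
  · exact (ConnectedComponent.eq_of_map_induceHomOfLE_eq h hD hCD.symm).symm
  · exact ConnectedComponent.eq_of_map_induceHomOfLE_eq h hC hCD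
  · exact ConnectedComponent.eq_of_map_induceHomOfLE_eq h hC hCD

variable {A₁ A₂ : Set V} {v : V}

lemma ConnectedComponent.isolatedFrom_compl_or_of_notMem_supp (hcover : A₁ ∪ A₂ = Set.univ)
    (h₁ : ∀ x y, G.Adj x y → x ∈ A₁ → y ∉ A₁ → x = v)
    (h₂ : ∀ x y, G.Adj x y → x ∈ A₂ → y ∉ A₂ → x = v)
    {U : Set V} (hv : v ∈ U) (C : (G.induce U).ConnectedComponent) (hvC : ⟨v, hv⟩ ∉ C.supp) :
    C.IsolatedFrom A₁ᶜ ∨ C.IsolatedFrom A₂ᶜ := by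
  unfold ConnectedComponent.IsolatedFrom
  by_contra! ⟨⟨x, hx, y, hy, hxy⟩, ⟨x', hx', y', hy', hxy'⟩⟩
  have hxA₁ : x.1 ∉ A₁ := by
    intro hxA
    obtain rfl := h₁ _ _ hxy hxA hy
    exact hvC hx
  have hx'A₂ : x'.1 ∉ A₂ := by
    intro hxA
    obtain rfl := h₂ _ _ hxy' hxA hy'
    exact hvC hx'
  have hxA₂ : x.1 ∈ A₂ := (hcover.symm ▸ Set.mem_univ x.1 : x.1 ∈ A₁ ∪ A₂).resolve_left hxA₁
  obtain ⟨_, hv'⟩ := C.exists_mem_supp_of_adj_leaving h₂ hx hx' hxA₂ hx'A₂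
  exact hvC hv'

lemma eq_of_sup_adj_of_notMem {G₁ G₂ : SimpleGraph V} (hsupp₁ : G₁.support ⊆ A₁)
    (hsupp₂ : G₂.support ⊆ A₂) (hAint : A₁ ∩ A₂ = {v}) :
    ∀ x y, (G₁ ⊔ G₂).Adj x y → x ∈ A₁ → y ∉ A₁ → x = v := by
  rintro x y (h | h) hx hy
  · exact absurd (hsupp₁ ⟨x, h.symm⟩) hy
  · exact (hAint ▸ ⟨hx, hsupp₂ ⟨y, h⟩⟩ : x ∈ ({v} : Set V))

end SimpleGraph

section

variable {V : Type*} {G : SimpleGraph V}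

lemma numComp_add_one_le [Finite V] {A₁ A₂ S : Set V} {v : V} (hcover : A₁ ∪ A₂ = Set.univ)
    (h₁ : ∀ x y, G.Adj x y → x ∈ A₁ → y ∉ A₁ → x = v)
    (h₂ : ∀ x y, G.Adj x y → x ∈ A₂ → y ∉ A₂ → x = v) (hv : v ∉ S) :
    numComp G S + 1 ≤ numComp G (S ∩ A₁) + numComp G (S ∩ A₂) := by
  set Cv := (G.induce Sᶜ).connectedComponentMk ⟨v, hv⟩
  set X₁ := insert Cv {C : (G.induce Sᶜ).ConnectedComponent | C.IsolatedFrom ((S ∩ A₁)ᶜ \ Sᶜ)}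
  set X₂ := insert Cv {C : (G.induce Sᶜ).ConnectedComponent | C.IsolatedFrom ((S ∩ A₂)ᶜ \ Sᶜ)}
  have hX₁ : X₁.ncard ≤ numComp G (S ∩ A₁) :=
    ncard_insert_isolatedFrom_le (Set.compl_subset_compl.mpr Set.inter_subset_left) Cv
  have hX₂ : X₂.ncard ≤ numComp G (S ∩ A₂) :=
    ncard_insert_isolatedFrom_le (Set.compl_subset_compl.mpr Set.inter_subset_left) Cv
  have hunion : X₁ ∪ X₂ = Set.univ := by
    refine Set.eq_univ_of_forall fun C => ?_
    by_cases hC : C = Cv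
    · exact Or.inl (Or.inl hC)
    rcases C.isolatedFrom_compl_or_of_notMem_supp hcover h₁ h₂ hv (fun h => hC h.symm)
      with hC₁ | hC₂
    · exact Or.inl (Or.inr fun x hx y hy => hC₁ x hx y fun hyA => hy.1 ⟨not_not.mp hy.2, hyA⟩)
    · exact Or.inr (Or.inr fun x hx y hy => hC₂ x hx y fun hyA => hy.1 ⟨not_not.mp hy.2, hyA⟩)
  have hinter : 1 ≤ (X₁ ∩ X₂).ncard := (Set.ncard_pos).mpr ⟨Cv, Or.inl rfl, Or.inl rfl⟩
  calc numComp G S + 1 ≤ (X₁ ∪ X₂).ncard + (X₁ ∩ X₂).ncard := by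
        rw [hunion, Set.ncard_univ]; exact Nat.add_le_add_left hinter _
    _ = X₁.ncard + X₂.ncard := Set.ncard_union_add_ncard_inter _ _
    _ ≤ _ := Nat.add_le_add hX₁ hX₂

lemma toughness_mul_numComp_le {T : Set V} (hT : IsCutset G T) :
    toughness G * numComp G T ≤ T.ncard := by
  have hpos : (0 : ℝ) < numComp G T := by exact_mod_cast zero_lt_one.trans hT
  rw [← le_div_iff₀ hpos]
  refine csInf_le ⟨0, ?_⟩ ⟨T, hT, rfl⟩
  rintro _ ⟨U, -, rfl⟩
  positivity

lemma not_isToughSet_of_union_eq [Finite V] {S S₁ S₂ : Set V} (hS : S₁ ∪ S₂ = S)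
    (hdisj : Disjoint S₁ S₂) (h₁ : S₁.Nonempty) (h₂ : S₂.Nonempty)
    (hc : numComp G S + 1 ≤ numComp G S₁ + numComp G S₂) : ¬ IsToughSet G S := by
  subst hS
  rintro ⟨hcut, heq⟩
  rw [Set.ncard_union_eq hdisj, Nat.cast_add] at heq
  have hpos₁ : (0 : ℝ) < S₁.ncard := by exact_mod_cast (Set.ncard_pos).mpr h₁
  have hpos₂ : (0 : ℝ) < S₂.ncard := by exact_mod_cast (Set.ncard_pos).mpr h₂
  have hcut' : (1 : ℝ) < numComp G (S₁ ∪ S₂) := by exact_mod_cast hcut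
  have hcR : (numComp G (S₁ ∪ S₂) : ℝ) + 1 ≤ numComp G S₁ + numComp G S₂ := by
    exact_mod_cast hc
  have ht : 0 < toughness G := by nlinarith
  by_cases hc₁ : IsCutset G S₁ <;> by_cases hc₂ : IsCutset G S₂
  · nlinarith [toughness_mul_numComp_le hc₁, toughness_mul_numComp_le hc₂]
  · have : (numComp G S₂ : ℝ) ≤ 1 := by exact_mod_cast not_lt.mp hc₂
    nlinarith [toughness_mul_numComp_le hc₁]
  · have : (numComp G S₁ : ℝ) ≤ 1 := by exact_mod_cast not_lt.mp hc₁
    nlinarith [toughness_mul_numComp_le hc₂]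
  · have : (numComp G S₁ : ℝ) ≤ 1 := by exact_mod_cast not_lt.mp hc₁
    have : (numComp G S₂ : ℝ) ≤ 1 := by exact_mod_cast not_lt.mp hc₂
    linarith

end

theorem toughSet_subset_of_cutVertex_general {V : Type*} [Fintype V]
    (G G₁ G₂ : SimpleGraph V) (A₁ A₂ : Set V) (v : V)
    (hG : G = G₁ ⊔ G₂)
    (hsupp₁ : G₁.support ⊆ A₁) (hsupp₂ : G₂.support ⊆ A₂)
    (hAint : A₁ ∩ A₂ = {v}) (hAuniv : A₁ ∪ A₂ = Set.univ)
    (S : Set V) (hS : IsToughSet G S) (hv : v ∉ S) :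
    S ⊆ A₁ \ {v} ∨ S ⊆ A₂ \ {v} := by
  subst hG
  have hleave₁ := eq_of_sup_adj_of_notMem hsupp₁ hsupp₂ hAint
  have hleave₂ := sup_comm G₁ G₂ ▸
    eq_of_sup_adj_of_notMem hsupp₂ hsupp₁ (Set.inter_comm A₁ A₂ ▸ hAint)
  have hmem (x : V) : x ∈ A₁ ∪ A₂ := hAuniv ▸ Set.mem_univ x
  have hsplit : S ∩ A₁ ∪ S ∩ A₂ = S := by
    rw [← Set.inter_union_distrib_left, hAuniv, Set.inter_univ]
  have hdisj : Disjoint (S ∩ A₁) (S ∩ A₂) := by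
    rw [Set.disjoint_iff_inter_eq_empty, Set.inter_inter_inter_comm, Set.inter_self, hAint,
      Set.inter_singleton_eq_empty.mpr hv]
  by_contra! ⟨hnot₁, hnot₂⟩
  obtain ⟨a, haS, ha⟩ := Set.not_subset.mp hnot₂
  obtain ⟨b, hbS, hb⟩ := Set.not_subset.mp hnot₁
  have haA₁ : a ∈ A₁ := (hmem a).resolve_right fun h => ha ⟨h, ne_of_mem_of_not_mem haS hv⟩
  have hbA₂ : b ∈ A₂ := (hmem b).resolve_left fun h => hb ⟨h, ne_of_mem_of_not_mem hbS hv⟩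
  exact not_isToughSet_of_union_eq hsplit hdisj ⟨a, haS, haA₁⟩ ⟨b, hbS, hbA₂⟩
    (numComp_add_one_le hAuniv hleave₁ hleave₂ hv) hS

/-- If `G = G₁ ∪ G₂` with `V(G₁) ∩ V(G₂) = {v}` and disjoint edge sets, and `S` is a tough
set of `G` not containing `v`, then `S ⊆ V(G₁) \ {v}` or `S ⊆ V(G₂) \ {v}`. -/
theorem toughSet_subset_of_cutVertex {V : Type*} [Fintype V]
    (G G₁ G₂ : SimpleGraph V) (A₁ A₂ : Set V) (v : V)
    (hG : G = G₁ ⊔ G₂) (hEdisj : Disjoint G₁.edgeSet G₂.edgeSet)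
    (hsupp₁ : G₁.support ⊆ A₁) (hsupp₂ : G₂.support ⊆ A₂)
    (hAint : A₁ ∩ A₂ = {v}) (hAuniv : A₁ ∪ A₂ = Set.univ)
    (hconn : G.Connected)
    (S : Set V) (hS : IsToughSet G S) (hv : v ∉ S) :
    S ⊆ A₁ \ {v} ∨ S ⊆ A₂ \ {v} :=
  toughSet_subset_of_cutVertex_general G G₁ G₂ A₁ A₂ v hG hsupp₁ hsupp₂ hAint hAuniv S hS hv
end

section
/- Let G = G₁ ∪ G₂ ∪ {v₁v₂} where v₁ ∈ V(G₁), v₂ ∈ V(G₂), and V(G₁) ∩ V(G₂) = ∅. If S is a tough set of G, then S ⊆ V(G₁) or S ⊆ V(G₂). -/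
open SimpleGraph

/-!
Write `c(X)` for the number of components of `G[X]`, `A = V(G₁)`, and split `S` into
`S₁ = S ∩ A`, `S₂ = S \ A`. Since `v₁v₂` is the only edge leaving `A`,
`c(G - S) ≤ c(G[A \ S]) + c(G[Aᶜ \ S])`, with one to spare when neither end of the bridge is
in `S`, while `c(G[A \ S]) ≤ c(G - S₁)`, with one to spare when `v₁ ∈ S`. Hence
`c(G - S) + 1 ≤ c(G - S₁) + c(G - S₂)`. On the other hand, if both parts of a tough set `S`
are nonempty, each of them has fewer components than `S` (it is smaller, and `S` minimises
`|S| / c(G - S)`); and if both are cutsets,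
`τ · (c(G - S₁) + c(G - S₂)) ≤ |S₁| + |S₂| = τ · c(G - S)` with `τ > 0`.
Either way `c(G - S₁) + c(G - S₂) ≤ c(G - S)`, a contradiction.
-/

theorem Set.compl_inter_subset_compl_inter {α : Type*} (s t : Set α) :
    sᶜ ∩ t ⊆ (s ∩ t)ᶜ :=
  fun _ hx hxst => hx.1 hxst.1

theorem Finite.card_lt_of_surjective_not_injective {α β : Type*} [Finite α] (f : α → β)
    (hsurj : Function.Surjective f) (hinj : ¬Function.Injective f) :
    Nat.card β < Nat.card α := by
  have := Fintype.ofFinite α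
  have : Finite β := .of_surjective f hsurj
  have := Fintype.ofFinite β
  simpa only [Nat.card_eq_fintype_card] using
    Fintype.card_lt_of_surjective_not_injective f hsurj hinj

namespace SimpleGraph

variable {V : Type*} {G : SimpleGraph V}

theorem Reachable.eq_of_forall_adj {β : Sort*} {f : V → β}
    (hf : ∀ x y, G.Adj x y → f x = f y) {x y : V} (h : G.Reachable x y) : f x = f y := by
  obtain ⟨p⟩ := h
  induction p with
  | nil => rfl
  | cons hadj _ ih => exact (hf _ _ hadj).trans ih

def splitComponentMap (G : SimpleGraph V) (U A : Set V) :
    (G.induce (U ∩ A)).ConnectedComponent ⊕ (G.induce (U ∩ Aᶜ)).ConnectedComponent →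
      (G.induce U).ConnectedComponent :=
  Sum.elim (ConnectedComponent.map (G.induceHomOfLE Set.inter_subset_left).toHom)
    (ConnectedComponent.map (G.induceHomOfLE Set.inter_subset_left).toHom)

theorem splitComponentMap_surjective (U A : Set V) :
    Function.Surjective (G.splitComponentMap U A) := by
  refine ConnectedComponent.ind fun ⟨x, hxU⟩ => ?_
  by_cases hxA : x ∈ A
  · exact ⟨.inl (connectedComponentMk _ ⟨x, hxU, hxA⟩), rfl⟩
  · exact ⟨.inr (connectedComponentMk _ ⟨x, hxU, hxA⟩), rfl⟩

theorem card_connectedComponent_induce_le_add [Finite V] (U A : Set V) :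
    Nat.card (G.induce U).ConnectedComponent ≤
      Nat.card (G.induce (U ∩ A)).ConnectedComponent +
        Nat.card (G.induce (U ∩ Aᶜ)).ConnectedComponent := by
  simpa only [Nat.card_sum] using
    Nat.card_le_card_of_surjective _ (splitComponentMap_surjective (G := G) U A)

theorem card_connectedComponent_induce_add_one_le_add [Finite V] {U A : Set V} {v w : V}
    (hvw : G.Adj v w) (hvU : v ∈ U) (hwU : w ∈ U) (hvA : v ∈ A) (hwA : w ∉ A) :
    Nat.card (G.induce U).ConnectedComponent + 1 ≤
      Nat.card (G.induce (U ∩ A)).ConnectedComponent +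
        Nat.card (G.induce (U ∩ Aᶜ)).ConnectedComponent := by
  have hnotinj : ¬Function.Injective (G.splitComponentMap U A) := fun hinj =>
    Sum.inl_ne_inr <| @hinj (.inl (connectedComponentMk _ ⟨v, hvU, hvA⟩))
      (.inr (connectedComponentMk _ ⟨w, hwU, hwA⟩)) (ConnectedComponent.sound
        (show (G.induce U).Adj ⟨v, hvU⟩ ⟨w, hwU⟩ from hvw).reachable)
  have := Finite.card_lt_of_surjective_not_injective _ (splitComponentMap_surjective U A) hnotinj
  rwa [Nat.card_sum] at this

def IsSoleExit (G : SimpleGraph V) (A : Set V) (v : V) : Prop :=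
  ∀ x ∈ A, ∀ y ∉ A, G.Adj x y → x = v

variable {A T : Set V} {v : V}

theorem isSoleExit_sup_fromEdgeSet {G₁ G₂ : SimpleGraph V} {v₁ v₂ : V} (h₁ : G₁.support ⊆ A)
    (h₂ : G₂.support ⊆ Aᶜ) (hv₂ : v₂ ∉ A) :
    (G₁ ⊔ G₂ ⊔ fromEdgeSet {s(v₁, v₂)}).IsSoleExit A v₁ := by
  rintro x hx y hy ((hxy | hxy) | hxy)
  · exact absurd (h₁ ⟨x, hxy.symm⟩) hy
  · exact absurd hx (h₂ ⟨y, hxy⟩)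
  · obtain ⟨hxy, -⟩ := (fromEdgeSet_adj _).mp hxy
    rcases Sym2.eq_iff.mp hxy with ⟨rfl, -⟩ | ⟨rfl, -⟩
    · rfl
    · exact absurd hx hv₂

open Classical in
/-- Everything outside `A` is sent to the component of `v`, its only way into `A`, or to `none`
if `v` is deleted. -/
noncomputable def sideRetraction (G : SimpleGraph V) (T A : Set V) (v : V)
    (x : ((T ∩ A)ᶜ : Set V)) :
    Option (G.induce (Tᶜ ∩ A)).ConnectedComponent :=
  if hx : (x : V) ∈ A then some (connectedComponentMk _ ⟨x, fun hxT => x.2 ⟨hxT, hx⟩, hx⟩)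
  else if hv : v ∈ Tᶜ ∩ A then some (connectedComponentMk _ ⟨v, hv⟩) else none

theorem sideRetraction_eq_of_adj (hv : G.IsSoleExit A v)
    {x y : ((T ∩ A)ᶜ : Set V)} (hxy : (G.induce (T ∩ A)ᶜ).Adj x y) :
    G.sideRetraction T A v x = G.sideRetraction T A v y := by
  have across : ∀ x y : ((T ∩ A)ᶜ : Set V), G.Adj x y → (x : V) ∈ A → (y : V) ∉ A →
      G.sideRetraction T A v x = G.sideRetraction T A v y := by
    intro x y hxy hx hy
    obtain rfl : (x : V) = v := hv x hx y hy hxy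
    have hxTA : (x : V) ∈ Tᶜ ∩ A := ⟨fun hxT => x.2 ⟨hxT, hx⟩, hx⟩
    simp only [sideRetraction, hx, hy, hxTA, dite_true, dite_false]
  by_cases hx : (x : V) ∈ A <;> by_cases hy : (y : V) ∈ A
  · simp only [sideRetraction, hx, hy, dite_true, Option.some.injEq]
    exact ConnectedComponent.eq.mpr (Adj.reachable hxy)
  · exact across x y hxy hx hy
  · exact (across y x hxy.symm hy hx).symm
  · simp only [sideRetraction, hx, hy, dite_false]

noncomputable def sideRetractionComponent (hv : G.IsSoleExit A v) :
    (G.induce (T ∩ A)ᶜ).ConnectedComponent → Option (G.induce (Tᶜ ∩ A)).ConnectedComponent :=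
  ConnectedComponent.lift (G.sideRetraction T A v) fun _ _ p _ =>
    p.reachable.eq_of_forall_adj fun _ _ => sideRetraction_eq_of_adj hv

theorem sideRetractionComponent_map (hv : G.IsSoleExit A v)
    (C : (G.induce (Tᶜ ∩ A)).ConnectedComponent) :
    sideRetractionComponent hv
      (C.map (G.induceHomOfLE (Set.compl_inter_subset_compl_inter T A)).toHom) = some C := by
  induction C using ConnectedComponent.ind with
  | h x => exact dif_pos x.2.2

theorem card_connectedComponent_induce_compl_inter_le [Finite V]
    (hv : G.IsSoleExit A v) :
    Nat.card (G.induce (Tᶜ ∩ A)).ConnectedComponent ≤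
      Nat.card (G.induce (T ∩ A)ᶜ).ConnectedComponent := by
  refine Nat.card_le_card_of_injective
    (ConnectedComponent.map (G.induceHomOfLE (Set.compl_inter_subset_compl_inter T A)).toHom)
    fun C D hCD => Option.some_injective _ ?_
  rw [← sideRetractionComponent_map hv C, ← sideRetractionComponent_map hv D, hCD]

theorem card_connectedComponent_induce_compl_inter_add_one_le [Finite V] {w : V}
    (hv : G.IsSoleExit A v) (hvT : v ∈ T) (hwA : w ∉ A) :
    Nat.card (G.induce (Tᶜ ∩ A)).ConnectedComponent + 1 ≤
      Nat.card (G.induce (T ∩ A)ᶜ).ConnectedComponent := by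
  rw [← Finite.card_option]
  refine Nat.card_le_card_of_surjective (sideRetractionComponent hv) ?_
  rintro (_ | C)
  · refine ⟨connectedComponentMk _ ⟨w, fun hw => hwA hw.2⟩, ?_⟩
    simp [sideRetractionComponent, sideRetraction, hwA, hvT]
  · exact ⟨_, sideRetractionComponent_map hv C⟩

end SimpleGraph

section Toughness

variable {V : Type*} {G : SimpleGraph V} {S T : Set V}

theorem numComp_add_one_le_numComp_inter_add_numComp_inter_compl [Finite V] {A : Set V}
    {v w : V} (hvw : G.Adj v w) (hvA : v ∈ A) (hwA : w ∉ A) (hv : G.IsSoleExit A v)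
    (hw : G.IsSoleExit Aᶜ w) (S : Set V) :
    numComp G S + 1 ≤ numComp G (S ∩ A) + numComp G (S ∩ Aᶜ) := by
  have hsplit := card_connectedComponent_induce_le_add (G := G) Sᶜ A
  have h₁ := card_connectedComponent_induce_compl_inter_le (T := S) hv
  have h₂ := card_connectedComponent_induce_compl_inter_le (T := S) hw
  unfold numComp
  by_cases hvS : v ∈ S
  · have := card_connectedComponent_induce_compl_inter_add_one_le hv hvS hwA
    omega
  by_cases hwS : w ∈ S
  · have := card_connectedComponent_induce_compl_inter_add_one_le hw hwS
      (Set.notMem_compl_iff.mpr hvA)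
    omega
  have := card_connectedComponent_induce_add_one_le_add (U := Sᶜ) hvw hvS hwS hvA hwA
  omega

theorem toughness_nonneg (G : SimpleGraph V) : 0 ≤ toughness G :=
  Real.sInf_nonneg <| by
    rintro _ ⟨T, -, rfl⟩
    positivity

theorem IsCutset.toughness_mul_le (hT : IsCutset G T) :
    toughness G * numComp G T ≤ T.ncard := by
  have hpos : (0 : ℝ) < numComp G T := by
    have : 1 < numComp G T := hT
    exact_mod_cast (zero_lt_one.trans this)
  rw [← le_div_iff₀ hpos]
  refine csInf_le ⟨0, ?_⟩ ⟨T, hT, rfl⟩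
  rintro _ ⟨T, -, rfl⟩
  positivity

theorem IsToughSet.toughness_pos (hS : IsToughSet G S) (hne : 0 < S.ncard) :
    0 < toughness G := by
  have : (0 : ℝ) < toughness G * numComp G S := hS.2 ▸ Nat.cast_pos.mpr hne
  exact pos_of_mul_pos_left this (Nat.cast_nonneg _)

theorem IsToughSet.numComp_lt_of_ncard_lt (hS : IsToughSet G S) (hT : T.ncard < S.ncard) :
    numComp G T < numComp G S := by
  by_contra! hle
  have hcut : IsCutset G T := lt_of_lt_of_le hS.1 hle
  refine lt_irrefl (toughness G * numComp G T) ?_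
  calc toughness G * numComp G T ≤ T.ncard := hcut.toughness_mul_le
    _ < S.ncard := by exact_mod_cast hT
    _ = toughness G * numComp G S := hS.2
    _ ≤ toughness G * numComp G T :=
      mul_le_mul_of_nonneg_left (by exact_mod_cast hle) (toughness_nonneg G)

theorem IsToughSet.numComp_inter_add_numComp_inter_compl_le [Finite V] {A : Set V}
    (hS : IsToughSet G S) (h₁ : (S ∩ A).Nonempty) (h₂ : (S ∩ Aᶜ).Nonempty) :
    numComp G (S ∩ A) + numComp G (S ∩ Aᶜ) ≤ numComp G S := by
  have hsum : (S ∩ A).ncard + (S ∩ Aᶜ).ncard = S.ncard := by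
    rw [← Set.sdiff_eq, Set.ncard_inter_add_ncard_sdiff_eq_ncard]
  have hk₁ := h₁.ncard_pos
  have hk₂ := h₂.ncard_pos
  have hc₁ := hS.numComp_lt_of_ncard_lt (T := S ∩ A) (by omega)
  have hc₂ := hS.numComp_lt_of_ncard_lt (T := S ∩ Aᶜ) (by omega)
  by_cases hcut : IsCutset G (S ∩ A) ∧ IsCutset G (S ∩ Aᶜ)
  · have hτ := hS.toughness_pos (by omega)
    have hsumR : ((S ∩ A).ncard : ℝ) + (S ∩ Aᶜ).ncard = S.ncard := by exact_mod_cast hsum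
    have : toughness G * (numComp G (S ∩ A) + numComp G (S ∩ Aᶜ) : ℕ) ≤
        toughness G * (numComp G S : ℕ) := by
      push_cast
      linarith [hcut.1.toughness_mul_le, hcut.2.toughness_mul_le, hS.2]
    exact_mod_cast le_of_mul_le_mul_left this hτ
  · unfold IsCutset at hcut
    omega

end Toughness

theorem toughSet_subset_of_bridge_general {V : Type*} [Fintype V]
    (G G₁ G₂ : SimpleGraph V) (A₁ A₂ : Set V) (v₁ v₂ : V)
    (hdisj : Disjoint A₁ A₂) (huniv : A₁ ∪ A₂ = Set.univ)
    (hsupp₁ : G₁.support ⊆ A₁) (hsupp₂ : G₂.support ⊆ A₂)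
    (hv₁ : v₁ ∈ A₁) (hv₂ : v₂ ∈ A₂)
    (hG : G = G₁ ⊔ G₂ ⊔ SimpleGraph.fromEdgeSet {s(v₁, v₂)})
    (S : Set V) (hS : IsToughSet G S) :
    S ⊆ A₁ ∨ S ⊆ A₂ := by
  obtain rfl : A₂ = A₁ᶜ := (IsCompl.compl_eq ⟨hdisj, codisjoint_iff.mpr huniv⟩).symm
  have hexit₁ : G.IsSoleExit A₁ v₁ := hG ▸ isSoleExit_sup_fromEdgeSet hsupp₁ hsupp₂ hv₂
  have hexit₂ : G.IsSoleExit A₁ᶜ v₂ := by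
    rw [hG, sup_comm G₁, Sym2.eq_swap]
    exact isSoleExit_sup_fromEdgeSet hsupp₂ (by rwa [compl_compl]) (Set.notMem_compl_iff.mpr hv₁)
  have hbridge : G.Adj v₁ v₂ :=
    hG ▸ Or.inr ((fromEdgeSet_adj _).mpr ⟨rfl, ne_of_mem_of_not_mem hv₁ hv₂⟩)
  have hsplit := numComp_add_one_le_numComp_inter_add_numComp_inter_compl
    hbridge hv₁ hv₂ hexit₁ hexit₂ S
  by_contra hsub
  have h₁ : (S ∩ A₁).Nonempty := Set.sdiff_compl ▸ Set.sdiff_nonempty.mpr (hsub <| .inr ·)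
  have h₂ : (S ∩ A₁ᶜ).Nonempty :=
    Set.sdiff_eq S A₁ ▸ Set.sdiff_nonempty.mpr (hsub <| .inl ·)
  have := hS.numComp_inter_add_numComp_inter_compl_le h₁ h₂
  omega

/-- If `G = G₁ ∪ G₂ ∪ {v₁v₂}` where `V(G₁)` and `V(G₂)` are disjoint, `v₁ ∈ V(G₁)`,
`v₂ ∈ V(G₂)`, and `S` is a tough set of `G`, then `S ⊆ V(G₁)` or `S ⊆ V(G₂)`. -/
theorem toughSet_subset_of_bridge {V : Type*} [Fintype V]
    (G G₁ G₂ : SimpleGraph V) (A₁ A₂ : Set V) (v₁ v₂ : V)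
    (hdisj : Disjoint A₁ A₂) (huniv : A₁ ∪ A₂ = Set.univ)
    (hsupp₁ : G₁.support ⊆ A₁) (hsupp₂ : G₂.support ⊆ A₂)
    (hv₁ : v₁ ∈ A₁) (hv₂ : v₂ ∈ A₂)
    (hG : G = G₁ ⊔ G₂ ⊔ SimpleGraph.fromEdgeSet {s(v₁, v₂)})
    (hconn : G.Connected)
    (S : Set V) (hS : IsToughSet G S) :
    S ⊆ A₁ ∨ S ⊆ A₂ :=
  toughSet_subset_of_bridge_general G G₁ G₂ A₁ A₂ v₁ v₂ hdisj huniv hsupp₁ hsupp₂ hv₁ hv₂ hG S hS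
end

section
/- Let G be a minimally t-tough graph and e = uv an edge of G. Then no tough set of G − e contains u or v. -/
open SimpleGraph

lemma induce_compl_deleteEdges_of_mem {V : Type*} (G : SimpleGraph V) {S : Set V} {u : V}
    (hu : u ∈ S) (v : V) :
    (G.deleteEdges {s(u, v)}).induce Sᶜ = G.induce Sᶜ := by
  ext a b
  simp only [comap_adj, Function.Embedding.coe_subtype, deleteEdges_adj, Set.mem_singleton_iff,
    and_iff_left_iff_imp]
  intro _ hab
  rcases Sym2.eq_iff.mp hab with ⟨rfl, -⟩ | ⟨-, rfl⟩
  · exact a.2 hu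
  · exact b.2 hu

lemma numComp_deleteEdges_of_mem {V : Type*} (G : SimpleGraph V) {S : Set V} {u : V}
    (hu : u ∈ S) (v : V) :
    numComp (G.deleteEdges {s(u, v)}) S = numComp G S := by
  rw [numComp, numComp, induce_compl_deleteEdges_of_mem G hu v]

lemma toughness_le_of_isCutset {V : Type*} {G : SimpleGraph V} {S : Set V} (hS : IsCutset G S) :
    toughness G ≤ (S.ncard : ℝ) / numComp G S := by
  refine csInf_le ⟨0, ?_⟩ ⟨S, hS, rfl⟩
  rintro _ ⟨T, -, rfl⟩
  positivity

lemma IsToughSet.toughness_eq {V : Type*} {G : SimpleGraph V} {S : Set V} (hS : IsToughSet G S) :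
    toughness G = (S.ncard : ℝ) / numComp G S := by
  have hc : (0 : ℝ) < numComp G S := by exact_mod_cast (Nat.zero_lt_one.trans hS.1)
  rw [hS.2, mul_div_cancel_right₀ _ hc.ne']

/-- A tough set `S` of `G - uv` with `u ∈ S` splits `G` into as many components as it splits
`G - uv`, so `τ(G) ≤ |S| / c(G - S) = τ(G - uv)`, against minimality. -/
lemma MinTough.notMem_of_isToughSet_deleteEdges {V : Type*} {G : SimpleGraph V} {t : ℝ}
    (hG : MinTough G t) {u v : V} (he : G.Adj u v) {S : Set V}
    (hS : IsToughSet (G.deleteEdges {s(u, v)}) S) : u ∉ S := by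
  intro hu
  have hcomp := numComp_deleteEdges_of_mem G hu v
  have hcut : IsCutset G S := by
    rw [IsCutset, ← hcomp]
    exact hS.1
  have hlt : toughness (G.deleteEdges {s(u, v)}) < t := hG.2 _ he
  have hle := toughness_le_of_isCutset hcut
  rw [hS.toughness_eq, hcomp] at hlt
  rw [hG.1] at hle
  exact hle.not_gt hlt

theorem toughSet_of_deleteEdge_avoids_ends_general {V : Type*}
    (G : SimpleGraph V) (t : ℝ) (hG : MinTough G t)
    (u v : V) (he : G.Adj u v)
    (S : Set V) (hS : IsToughSet (G.deleteEdges {s(u, v)}) S) :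
    u ∉ S ∧ v ∉ S := by
  refine ⟨hG.notMem_of_isToughSet_deleteEdges he hS, hG.notMem_of_isToughSet_deleteEdges he.symm ?_⟩
  rwa [Sym2.eq_swap]

/-- If `G` is minimally `t`-tough and `e = uv` is an edge of `G`, then no tough set of
`G − e` contains `u` or `v`. -/
theorem toughSet_of_deleteEdge_avoids_ends {V : Type*} [Fintype V]
    (G : SimpleGraph V) (t : ℝ) (hG : MinTough G t)
    (u v : V) (he : G.Adj u v)
    (S : Set V) (hS : IsToughSet (G.deleteEdges {s(u, v)}) S) :
    u ∉ S ∧ v ∉ S :=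
  toughSet_of_deleteEdge_avoids_ends_general G t hG u v he S hS
end

section
/- Every necklace graph is minimally 1/2-tough. -/
open SimpleGraph

inductive SPTree (V : Type*) where
  | edge (u v : V) : SPTree V
  | series (l r : SPTree V) : SPTree V
  | parallel (l r : SPTree V) : SPTree V

namespace SPTree

def src {V : Type*} : SPTree V → V
  | edge u _ => u
  | series l _ => l.src
  | parallel l _ => l.src

def tgt {V : Type*} : SPTree V → V
  | edge _ v => v
  | series _ r => r.tgt
  | parallel l _ => l.tgt

def verts {V : Type*} : SPTree V → Set V
  | edge u v => {u, v}
  | series l r => l.verts ∪ r.verts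
  | parallel l r => l.verts ∪ r.verts

def edges {V : Type*} : SPTree V → Set (Sym2 V)
  | edge u v => {s(u, v)}
  | series l r => l.edges ∪ r.edges
  | parallel l r => l.edges ∪ r.edges

def WF {V : Type*} : SPTree V → Prop
  | edge u v => u ≠ v
  | series l r => l.WF ∧ r.WF ∧ l.tgt = r.src ∧ l.verts ∩ r.verts = {l.tgt}
  | parallel l r => l.WF ∧ r.WF ∧ l.src = r.src ∧ l.tgt = r.tgt ∧
      l.verts ∩ r.verts = {l.src, l.tgt} ∧ Disjoint l.edges r.edges

end SPTree

/-- `G` is the series-parallel graph given by the (well-formed, spanning) sp-tree `T`. -/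
def RepresentsSP {V : Type*} (G : SimpleGraph V) (T : SPTree V) : Prop :=
  T.WF ∧ T.verts = Set.univ ∧ G = SimpleGraph.fromEdgeSet T.edges

def IsSPGraph {V : Type*} (G : SimpleGraph V) : Prop := ∃ T : SPTree V, RepresentsSP G T

/-- `IsPathT t n` : the sp-tree `t` is a series join of edges forming a path of length `n`. -/
inductive IsPathT {V : Type*} : SPTree V → ℕ → Prop
  | edge (u v : V) : IsPathT (.edge u v) 1
  | series {l r : SPTree V} {m n : ℕ} : IsPathT l m → IsPathT r n → IsPathT (.series l r) (m + n)

/-- `R₂` : the parallel join of two paths of length 2. -/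
def IsR2 {V : Type*} (t : SPTree V) : Prop :=
  ∃ l r : SPTree V, t = .parallel l r ∧ IsPathT l 2 ∧ IsPathT r 2

/-- A tail of a necklace: a series join of single edges and `R₂` subgraphs whose last
constituent is a single edge. -/
inductive NeckTail {V : Type*} : SPTree V → Prop
  | base (u v : V) : NeckTail (.edge u v)
  | consEdge (u v : V) {r : SPTree V} : NeckTail r → NeckTail (.series (.edge u v) r)
  | consR2 {p r : SPTree V} : IsR2 p → NeckTail r → NeckTail (.series p r)

/-- A necklace: a series join of single edges and `R₂` subgraphs whose first and last
constituents are single edges. -/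
def IsNecklaceTree {V : Type*} (T : SPTree V) : Prop :=
  ∃ (u v : V) (r : SPTree V), T = .series (.edge u v) r ∧ NeckTail r

/-!
A necklace has a closed walk through all its vertices that passes each vertex at most twice: go
out along one side of every `R₂` and come back along the other. Removing a nonempty set `S` cuts
such a walk into at most `2 |S|` arcs, each lying in one component, so `τ ≥ 1/2`; removing the
second vertex isolates the first one, so `τ ≤ 1/2`.

Deleting a single-edge constituent disconnects the graph. Deleting the edge `s a` of an `R₂` with
ends `s, t` and middle vertices `a, b` leaves `a` pendant at `t`, and removing `t` leaves three
components: `{a}`, the part containing `s` and the part beyond `t`, nonempty because the necklace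
ends with an edge. Symmetrically for `a t`, using that the necklace begins with an edge.
-/

section Toughness

variable {V : Type*} {G : SimpleGraph V} {S : Set V}

lemma toughness_le_div (hS : IsCutset G S) : toughness G ≤ S.ncard / numComp G S :=
  csInf_le ⟨0, by rintro _ ⟨_, _, rfl⟩; positivity⟩ ⟨S, hS, rfl⟩

lemma one_div_le_toughness {k : ℕ} (hcut : ∃ S, IsCutset G S)
    (h : ∀ S, IsCutset G S → numComp G S ≤ k * S.ncard) : 1 / k ≤ toughness G := by
  obtain ⟨S₀, hS₀⟩ := hcut
  refine le_csInf ⟨_, S₀, hS₀, rfl⟩ ?_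
  rintro _ ⟨S, hS, rfl⟩
  have hk := h S hS
  have hk0 : 0 < k := Nat.pos_of_ne_zero (by rintro rfl; unfold IsCutset at hS; omega)
  rw [div_le_div_iff₀ (by exact_mod_cast hk0) (by exact_mod_cast zero_lt_one.trans hS), one_mul]
  exact_mod_cast hk.trans_eq (mul_comm _ _)

lemma le_numComp_of_map [Finite V] {n : ℕ} (f : V → Fin n)
    (hf : ∀ x y, x ∉ S → y ∉ S → G.Adj x y → f x = f y) (hsurj : ∀ i, ∃ x ∉ S, f x = i) :
    n ≤ numComp G S := by
  have hwalk : ∀ x y (p : (G.induce Sᶜ).Walk x y), f x = f y := by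
    intro x y p
    induction p with
    | nil => rfl
    | @cons u v _ h _ ih => exact (hf _ _ u.2 v.2 h).trans ih
  let φ : (G.induce Sᶜ).ConnectedComponent → Fin n :=
    ConnectedComponent.lift (fun x => f x) fun x y p _ => hwalk x y p
  have hφ : Function.Surjective φ := fun i => by
    obtain ⟨x, hx, rfl⟩ := hsurj i
    exact ⟨(G.induce Sᶜ).connectedComponentMk ⟨x, hx⟩, rfl⟩
  simpa [numComp] using Nat.card_le_card_of_surjective φ hφ

lemma two_le_numComp [Finite V] (C : Set V)
    (hC : ∀ x y, x ∉ S → y ∉ S → G.Adj x y → (x ∈ C ↔ y ∈ C)) {x y : V} (hx : x ∈ C)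
    (hxS : x ∉ S) (hy : y ∉ C) (hyS : y ∉ S) : 2 ≤ numComp G S := by
  classical
  refine le_numComp_of_map (fun z => if z ∈ C then 0 else 1) ?_ fun i => ?_
  · intro x y hx hy hxy
    simp only [hC x y hx hy hxy]
  · fin_cases i
    exacts [⟨x, hxS, if_pos hx⟩, ⟨y, hyS, if_neg hy⟩]

lemma toughness_lt_half_of_three_le_numComp_singleton {t : V} (h : 3 ≤ numComp G {t}) :
    toughness G < 1 / 2 := by
  refine (toughness_le_div (S := {t}) (show 1 < numComp G {t} by omega)).trans_lt ?_
  have h3 : (3 : ℝ) ≤ numComp G {t} := by exact_mod_cast h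
  rw [Set.ncard_singleton, Nat.cast_one, div_lt_div_iff₀ (by linarith) two_pos]
  linarith

variable [Finite V]

lemma toughness_deleteEdges_lt_half_of_separating (C : Set V) {e : Sym2 V}
    (hC : ∀ x y, G.Adj x y → s(x, y) ≠ e → (x ∈ C ↔ y ∈ C)) {x y : V} (hx : x ∈ C)
    (hy : y ∉ C) : toughness (G.deleteEdges {e}) < 1 / 2 :=
  (toughness_le_div (S := ∅) (two_le_numComp C
    (fun x y _ _ h => hC x y (deleteEdges_adj.mp h).1 (deleteEdges_adj.mp h).2)
    hx (Set.notMem_empty x) hy (Set.notMem_empty y))).trans_lt (by simp)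

-- The 4-cycle `s a t b` joins `L ∋ s` to `R ∋ t`. Once `s a` is deleted, removing `t` leaves
-- `{a}`, `L ∪ {b}` and `R \ {t}` mutually unlinked.
lemma three_le_numComp_deleteEdges_of_fourCycle {L R : Set V} {s a b t r : V}
    (hLR : Disjoint L R) (ha : a ∉ L ∪ R) (hb : b ∉ L ∪ R) (hab : a ≠ b) (hs : s ∈ L)
    (ht : t ∈ R) (hr : r ∈ R) (hrt : r ≠ t)
    (hG : ∀ x y, G.Adj x y → (x ∈ L ∧ y ∈ L) ∨ (x ∈ R ∧ y ∈ R) ∨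
      s(x, y) ∈ ({s(s, a), s(a, t), s(s, b), s(b, t)} : Set (Sym2 V))) :
    3 ≤ numComp (G.deleteEdges {s(s, a)}) {t} := by
  classical
  simp only [Set.mem_union, not_or] at ha hb
  have hsR : s ∉ R := hLR.notMem_of_mem_left hs
  have hsa : s ≠ a := fun h => ha.1 (h ▸ hs)
  have hta : t ≠ a := fun h => ha.2 (h ▸ ht)
  refine le_numComp_of_map (fun x => if x = a then 0 else if x ∈ R then 2 else 1) ?_ fun i => ?_
  · intro x y hx hy hxy
    rw [deleteEdges_adj, Set.mem_singleton_iff] at hxy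
    rw [Set.mem_singleton_iff] at hx hy
    rcases hG x y hxy.1 with ⟨hx', hy'⟩ | ⟨hx', hy'⟩ | hxy'
    · have hxR := hLR.notMem_of_mem_left hx'
      have hyR := hLR.notMem_of_mem_left hy'
      simp [hxR, hyR, show x ≠ a by grind, show y ≠ a by grind]
    · simp [hx', hy', show x ≠ a by grind, show y ≠ a by grind]
    · simp only [Set.mem_insert_iff, Set.mem_singleton_iff, Sym2.eq_iff] at hxy'
      grind
  · fin_cases i
    · exact ⟨a, hta.symm, if_pos rfl⟩
    · exact ⟨s, fun h => hsR (h ▸ ht), by simp [hsa, hsR]⟩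
    · exact ⟨r, hrt, by simp [hr, show r ≠ a by grind]⟩

lemma toughness_deleteEdges_lt_half_of_fourCycle {L R : Set V} {s a b t l r : V}
    (hLR : Disjoint L R) (ha : a ∉ L ∪ R) (hb : b ∉ L ∪ R) (hab : a ≠ b) (hs : s ∈ L)
    (hl : l ∈ L) (hls : l ≠ s) (ht : t ∈ R) (hr : r ∈ R) (hrt : r ≠ t)
    (hG : ∀ x y, G.Adj x y → (x ∈ L ∧ y ∈ L) ∨ (x ∈ R ∧ y ∈ R) ∨
      s(x, y) ∈ ({s(s, a), s(a, t), s(s, b), s(b, t)} : Set (Sym2 V)))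
    {e : Sym2 V} (he : e ∈ ({s(s, a), s(a, t), s(s, b), s(b, t)} : Set (Sym2 V))) :
    toughness (G.deleteEdges {e}) < 1 / 2 := by
  have hRL : ∀ x y, G.Adj x y → (x ∈ R ∧ y ∈ R) ∨ (x ∈ L ∧ y ∈ L) ∨
      s(x, y) ∈ ({s(t, a), s(a, s), s(t, b), s(b, s)} : Set (Sym2 V)) := fun x y h => by
    have := hG x y h
    simp only [Set.mem_insert_iff, Set.mem_singleton_iff, Sym2.eq_swap (a := t),
      Sym2.eq_swap (b := s)] at this ⊢
    tauto
  have hba : ∀ x y, G.Adj x y → (x ∈ L ∧ y ∈ L) ∨ (x ∈ R ∧ y ∈ R) ∨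
      s(x, y) ∈ ({s(s, b), s(b, t), s(s, a), s(a, t)} : Set (Sym2 V)) := fun x y h => by
    have := hG x y h
    simp only [Set.mem_insert_iff, Set.mem_singleton_iff] at this ⊢
    tauto
  have hRLba : ∀ x y, G.Adj x y → (x ∈ R ∧ y ∈ R) ∨ (x ∈ L ∧ y ∈ L) ∨
      s(x, y) ∈ ({s(t, b), s(b, s), s(t, a), s(a, s)} : Set (Sym2 V)) := fun x y h => by
    have := hRL x y h
    simp only [Set.mem_insert_iff, Set.mem_singleton_iff] at this ⊢
    tauto
  have ha' : a ∉ R ∪ L := by rwa [Set.union_comm]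
  have hb' : b ∉ R ∪ L := by rwa [Set.union_comm]
  rcases he with rfl | rfl | rfl | rfl
  · exact toughness_lt_half_of_three_le_numComp_singleton
      (three_le_numComp_deleteEdges_of_fourCycle hLR ha hb hab hs ht hr hrt hG)
  · exact Sym2.eq_swap ▸ toughness_lt_half_of_three_le_numComp_singleton
      (three_le_numComp_deleteEdges_of_fourCycle hLR.symm ha' hb' hab ht hs hl hls hRL)
  · exact toughness_lt_half_of_three_le_numComp_singleton
      (three_le_numComp_deleteEdges_of_fourCycle hLR hb ha hab.symm hs ht hr hrt hba)
  · exact Sym2.eq_swap ▸ toughness_lt_half_of_three_le_numComp_singleton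
      (three_le_numComp_deleteEdges_of_fourCycle hLR.symm hb' ha' hab.symm ht hs hl hls hRLba)

end Toughness

lemma List.countP_mem_le_mul_ncard {α : Type*} [DecidableEq α] [Finite α] {l : List α} {k : ℕ}
    (h : ∀ x, l.count x ≤ k) (S : Set α) [DecidablePred (· ∈ S)] :
    l.countP (· ∈ S) ≤ k * S.ncard := by
  rw [← List.sum_map_count_dedup_filter_eq_countP]
  set L := l.dedup.filter (· ∈ S)
  have hL : L.length ≤ S.ncard := by
    rw [← List.toFinset_card_of_nodup ((List.nodup_dedup l).filter _), ← Set.ncard_coe_finset]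
    exact Set.ncard_le_ncard fun x hx => by simp_all
  calc (L.map (l.count ·)).sum ≤ L.length * k := by
        simpa using List.sum_le_card_nsmul (L.map (l.count ·)) k (by simpa using fun x _ => h x)
    _ ≤ k * S.ncard := by rw [mul_comm]; exact Nat.mul_le_mul_left k hL

section ClosedWalk

variable {V : Type*} {G : SimpleGraph V} {S : Set V}

def visitedComponents (S : Set V) {u v : V} (p : G.Walk u v) :
    Set (G.induce Sᶜ).ConnectedComponent :=
  {c | ∃ x, ∃ hx : x ∈ Sᶜ, x ∈ p.support ∧ (G.induce Sᶜ).connectedComponentMk ⟨x, hx⟩ = c}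

variable [Finite V]

lemma ncard_visitedComponents_le [DecidablePred (· ∈ S)] {u v : V} (p : G.Walk u v) :
    (visitedComponents S p).ncard ≤ p.support.tail.countP (· ∈ S) + if v ∈ S then 0 else 1 := by
  induction p with
  | @nil u =>
    split_ifs with hu
    · simp [visitedComponents, hu]
    · refine Set.ncard_le_one_iff_subsingleton.mpr ?_
      rintro _ ⟨x, hx, hxu, rfl⟩ _ ⟨y, hy, hyu, rfl⟩
      simp only [Walk.support_nil, List.mem_singleton] at hxu hyu
      subst hxu hyu
      rfl
  | @cons u w v h p ih =>
    have hcount : (Walk.cons h p).support.tail.countP (· ∈ S) =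
        p.support.tail.countP (· ∈ S) + if w ∈ S then 1 else 0 := by
      rw [Walk.support_cons, List.tail_cons, ← Walk.cons_tail_support, List.countP_cons]
      simp
    set A := {c | ∃ hu : u ∈ Sᶜ, (G.induce Sᶜ).connectedComponentMk ⟨u, hu⟩ = c}
    have hsub : visitedComponents S (.cons h p) ⊆ A ∪ visitedComponents S p := by
      rintro _ ⟨x, hx, hmem, rfl⟩
      rcases List.mem_cons.mp hmem with rfl | hmem
      exacts [Or.inl ⟨hx, rfl⟩, Or.inr ⟨x, hx, hmem, rfl⟩]
    by_cases hw : w ∈ S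
    · have hA : A.ncard ≤ 1 :=
        Set.ncard_le_one_iff_subsingleton.mpr (by rintro _ ⟨_, rfl⟩ _ ⟨_, rfl⟩; rfl)
      have := (Set.ncard_le_ncard hsub (Set.toFinite _)).trans (Set.ncard_union_le _ _)
      simp only [hw, if_true] at hcount
      omega
    · have hA : A ⊆ visitedComponents S p := by
        rintro _ ⟨hu, rfl⟩
        refine ⟨w, hw, p.start_mem_support, ConnectedComponent.sound ?_⟩
        exact (show (G.induce Sᶜ).Adj ⟨w, hw⟩ ⟨u, hu⟩ from h.symm).reachable
      have := Set.ncard_le_ncard (hsub.trans (Set.union_subset hA le_rfl)) (Set.toFinite _)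
      omega

lemma numComp_empty_le_one_of_walk {u v : V} (p : G.Walk u v) (hcover : ∀ x, x ∈ p.support) :
    numComp G ∅ ≤ 1 := by
  classical
  have hmet : visitedComponents ∅ p = Set.univ := by
    refine Set.eq_univ_of_forall fun c => ?_
    obtain ⟨x, rfl⟩ := c.exists_rep
    exact ⟨x, x.2, hcover x, rfl⟩
  simpa [numComp, ← Set.ncard_univ, ← hmet] using ncard_visitedComponents_le (S := ∅) p

lemma numComp_le_countP_of_closedWalk [DecidableEq V] [DecidablePred (· ∈ S)] {u : V}
    (p : G.Walk u u) (hcover : ∀ x, x ∈ p.support.tail) (hS : S.Nonempty) :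
    numComp G S ≤ p.support.tail.countP (· ∈ S) := by
  obtain ⟨s, hs⟩ := hS
  -- starting the walk inside `S` makes every component be entered right after a visit to `S`
  set q := p.rotate s (List.mem_of_mem_tail (hcover s))
  have hrot := p.support_rotate s (List.mem_of_mem_tail (hcover s))
  have hmet : visitedComponents S q = Set.univ := by
    refine Set.eq_univ_of_forall fun c => ?_
    obtain ⟨x, rfl⟩ := c.exists_rep
    exact ⟨x, x.2, List.mem_of_mem_tail (hrot.mem_iff.mpr (hcover x)), rfl⟩
  have := ncard_visitedComponents_le (S := S) q
  rwa [hmet, Set.ncard_univ, if_pos hs, add_zero, hrot.perm.countP_eq] at this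

lemma one_div_le_toughness_of_closedWalk [DecidableEq V] {u : V} (p : G.Walk u u) {k : ℕ}
    (hcover : ∀ x, x ∈ p.support.tail) (hk : ∀ x, p.support.tail.count x ≤ k)
    (hcut : ∃ S, IsCutset G S) : 1 / k ≤ toughness G := by
  classical
  refine one_div_le_toughness hcut fun S hS => ?_
  rcases S.eq_empty_or_nonempty with rfl | hne
  · exact absurd hS (not_lt.mpr
      (numComp_empty_le_one_of_walk p fun x => List.mem_of_mem_tail (hcover x)))
  · exact (numComp_le_countP_of_closedWalk p hcover hne).trans (List.countP_mem_le_mul_ncard hk S)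

end ClosedWalk

namespace SPTree

variable {V : Type*}

lemma mem_verts_of_mem_edges {t : SPTree V} {e : Sym2 V} (he : e ∈ t.edges) {x : V}
    (hx : x ∈ e) : x ∈ t.verts := by
  induction t with
  | edge u v =>
    obtain rfl := Set.mem_singleton_iff.mp he
    rcases Sym2.mem_iff.mp hx with rfl | rfl <;> simp [verts]
  | series l r ihl ihr | parallel l r ihl ihr =>
    exact he.imp (ihl · ) (ihr ·)

lemma src_mem_verts (t : SPTree V) : t.src ∈ t.verts := by
  induction t with
  | edge u v => exact Set.mem_insert _ _
  | series l r ihl _ | parallel l r ihl _ => exact Or.inl ihl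

lemma tgt_mem_verts (t : SPTree V) : t.tgt ∈ t.verts := by
  induction t with
  | edge u v => exact Set.mem_insert_of_mem _ rfl
  | series l r _ ihr => exact Or.inr ihr
  | parallel l r ihl _ => exact Or.inl ihl

lemma notMem_verts_of_wf_series {l r : SPTree V} (h : (series l r).WF) {x : V}
    (hx : x ∈ l.verts) (hne : x ≠ l.tgt) : x ∉ r.verts := fun hr =>
  hne (h.2.2.2.subset ⟨hx, hr⟩)

end SPTree

section Necklace

open SPTree

variable {V : Type*}

lemma IsPathT.one_le {t : SPTree V} {n : ℕ} (h : IsPathT t n) : 1 ≤ n := by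
  induction h <;> omega

lemma IsPathT.exists_eq_edge {t : SPTree V} {n : ℕ} (h : IsPathT t n) (hn : n = 1) :
    ∃ u v, t = .edge u v := by
  cases h with
  | edge u v => exact ⟨u, v, rfl⟩
  | series hl hr => have := hl.one_le; have := hr.one_le; omega

lemma IsPathT.exists_eq_series {t : SPTree V} {n : ℕ} (h : IsPathT t n) (hn : n = 2) :
    ∃ x y y' z, t = .series (.edge x y) (.edge y' z) := by
  cases h with
  | edge => omega
  | series hl hr =>
    have := hl.one_le; have := hr.one_le
    obtain ⟨x, y, rfl⟩ := hl.exists_eq_edge (by omega)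
    obtain ⟨y', z, rfl⟩ := hr.exists_eq_edge (by omega)
    exact ⟨x, y, y', z, rfl⟩

lemma IsR2.exists_eq {p : SPTree V} (h : IsR2 p) (hwf : p.WF) :
    ∃ s a b t, p = .parallel (.series (.edge s a) (.edge a t)) (.series (.edge s b) (.edge b t)) ∧
      s ≠ a ∧ s ≠ b ∧ s ≠ t ∧ a ≠ b ∧ a ≠ t ∧ b ≠ t := by
  obtain ⟨l, r, rfl, hl, hr⟩ := h
  obtain ⟨s, a, a', t, rfl⟩ := hl.exists_eq_series rfl
  obtain ⟨s', b, b', t', rfl⟩ := hr.exists_eq_series rfl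
  obtain ⟨⟨hsa, hat, rfl, hla⟩, ⟨hsb, hbt, rfl, hlb⟩, rfl, rfl, hlr, -⟩ := hwf
  simp only [src, tgt, verts] at hla hlb hlr
  refine ⟨s, a, b, t, rfl, hsa, hsb, fun hst => hsa ?_, fun hab => ?_, hat, hbt⟩
  · subst hst
    exact (hla.subset ⟨Set.mem_insert _ _, Set.mem_insert_of_mem _ rfl⟩ : s = a)
  · subst hab
    have : a = s ∨ a = t := hlr.subset (by simp)
    exact this.elim (fun h => hsa h.symm) hat

lemma NeckTail.src_ne_tgt {t : SPTree V} (h : NeckTail t) (hwf : t.WF) : t.src ≠ t.tgt := by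
  cases h with
  | base u v => exact hwf
  | @consEdge u v r _ =>
    exact fun (heq : u = r.tgt) => notMem_verts_of_wf_series hwf (Set.mem_insert u {v}) hwf.1
      (heq ▸ r.tgt_mem_verts)
  | @consR2 p r hp _ =>
    obtain ⟨s, a, b, t, rfl, -, -, hst, -⟩ := hp.exists_eq hwf.1
    exact fun (heq : s = r.tgt) => notMem_verts_of_wf_series hwf (by simp [verts]) hst
      (heq ▸ r.tgt_mem_verts)

section ClosedTwoWalk

variable [DecidableEq V]

-- The single visit to `t.src` leaves room for a second one when `t` is glued behind a block.
def HasClosedTwoWalk (t : SPTree V) : Prop :=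
  ∃ p : (fromEdgeSet t.edges).Walk t.src t.src, (∀ x, x ∈ p.support.tail ↔ x ∈ t.verts) ∧
    p.support.tail.count t.src ≤ 1 ∧ ∀ x, p.support.tail.count x ≤ 2

lemma hasClosedTwoWalk_edge {u v : V} (huv : u ≠ v) : HasClosedTwoWalk (.edge u v) := by
  have h : (fromEdgeSet (SPTree.edge u v).edges).Adj u v := by simpa [edges] using huv
  dsimp only [HasClosedTwoWalk, src, verts]
  refine ⟨.cons h (.cons h.symm .nil), fun x => ?_, ?_, fun x => ?_⟩
  · simp [or_comm]
  · simp [huv.symm]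
  · simp only [Walk.support_cons, Walk.support_nil, List.tail_cons, List.count_cons,
      List.count_nil]
    split_ifs <;> simp

lemma HasClosedTwoWalk.series_edge {u v : V} {r : SPTree V} (hr : HasClosedTwoWalk r)
    (hwf : (series (.edge u v) r).WF) : HasClosedTwoWalk (series (.edge u v) r) := by
  have hu : u ∉ r.verts := notMem_verts_of_wf_series hwf (Set.mem_insert u {v}) hwf.1
  obtain ⟨huv : u ≠ v, -, hv : v = r.src, -⟩ := hwf
  subst hv
  obtain ⟨q, hmem, hsrc, hcnt⟩ := hr
  have hle : fromEdgeSet r.edges ≤ fromEdgeSet ((SPTree.edge u r.src).series r).edges :=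
    fromEdgeSet_mono Set.subset_union_right
  have h : (fromEdgeSet ((SPTree.edge u r.src).series r).edges).Adj u r.src := by
    simpa [edges] using huv
  dsimp only [HasClosedTwoWalk, src, verts]
  refine ⟨.cons h ((q.mapLe hle).append (.cons h.symm .nil)), ?_⟩
  simp only [Walk.support_cons, List.tail_cons, Walk.support_append,
    Walk.support_mapLe_eq_support, Walk.support_nil]
  rw [← q.cons_tail_support]
  have hqu : q.support.tail.count u = 0 := List.count_eq_zero.mpr (mt (hmem u).mp hu)
  have hsr := r.src_mem_verts
  refine ⟨fun x => ?_, ?_, fun x => ?_⟩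
  · simp only [List.cons_append, List.mem_cons, List.mem_append, hmem]
    grind
  · simp only [List.cons_append, List.count_cons, List.count_append]
    grind
  · have := hcnt x
    simp only [List.cons_append, List.count_cons, List.count_append]
    grind

lemma HasClosedTwoWalk.series_r2 {p r : SPTree V} (hr : HasClosedTwoWalk r) (hp : IsR2 p)
    (hwf : (series p r).WF) : HasClosedTwoWalk (series p r) := by
  obtain ⟨s, a, b, t, rfl, hsa, hsb, hst, hab, hat, hbt⟩ := hp.exists_eq hwf.1
  have hr_verts : ∀ x ∈ ({s, a, b} : Set V), x ∉ r.verts := by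
    rintro x hx
    refine notMem_verts_of_wf_series hwf ?_ ?_ <;> simp only [verts, tgt] <;> grind
  obtain ⟨-, -, ht : t = r.src, -⟩ := hwf
  subst ht
  obtain ⟨q, hmem, hsrc, hcnt⟩ := hr
  set T := ((SPTree.edge s a).series (SPTree.edge a r.src)).parallel
    ((SPTree.edge s b).series (SPTree.edge b r.src))
  have hle : fromEdgeSet r.edges ≤ fromEdgeSet (T.series r).edges :=
    fromEdgeSet_mono Set.subset_union_right
  have h₁ : (fromEdgeSet (T.series r).edges).Adj s a := by simp [T, edges, hsa]
  have h₂ : (fromEdgeSet (T.series r).edges).Adj a r.src := by simp [T, edges, hat]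
  have h₃ : (fromEdgeSet (T.series r).edges).Adj r.src b := by simp [T, edges, hbt.symm]
  have h₄ : (fromEdgeSet (T.series r).edges).Adj b s := by simp [T, edges, hsb.symm]
  dsimp only [HasClosedTwoWalk, T, src, verts]
  refine ⟨.cons h₁ (.cons h₂ ((q.mapLe hle).append (.cons h₃ (.cons h₄ .nil)))), ?_⟩
  simp only [Walk.support_cons, List.tail_cons, Walk.support_append,
    Walk.support_mapLe_eq_support, Walk.support_nil]
  rw [← q.cons_tail_support]
  have hq : ∀ x ∈ ({s, a, b} : Set V), q.support.tail.count x = 0 := fun x hx =>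
    List.count_eq_zero.mpr (mt (hmem x).mp (hr_verts x hx))
  have hqs := hq s (by simp)
  have hqa := hq a (by simp)
  have hqb := hq b (by simp)
  have hsr := r.src_mem_verts
  refine ⟨fun x => ?_, ?_, fun x => ?_⟩
  · simp only [List.cons_append, List.mem_cons, List.mem_append, hmem]
    grind
  · simp only [List.cons_append, List.count_cons, List.count_append]
    grind
  · have := hcnt x
    simp only [List.cons_append, List.count_cons, List.count_append]
    grind

lemma NeckTail.hasClosedTwoWalk {t : SPTree V} (ht : NeckTail t) (hwf : t.WF) :
    HasClosedTwoWalk t := by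
  induction ht with
  | base u v => exact hasClosedTwoWalk_edge hwf
  | consEdge u v _ ih => exact (ih hwf.2.1).series_edge hwf
  | consR2 hp _ ih => exact (ih hwf.2.1).series_r2 hp hwf

end ClosedTwoWalk

-- `t` is glued, at `t.src`, to the part `P` of the graph already traversed.
def IsAttached (G : SimpleGraph V) (P : Set V) (t : SPTree V) : Prop :=
  (∀ x y, G.Adj x y → (x ∈ P ∧ y ∈ P) ∨ s(x, y) ∈ t.edges) ∧ P ∩ t.verts = {t.src}

namespace IsAttached

variable {G : SimpleGraph V} {P : Set V} {l r : SPTree V}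

lemma src_mem {t : SPTree V} (h : IsAttached G P t) : t.src ∈ P :=
  (h.2.symm.subset rfl).1

lemma disjoint_right (h : IsAttached G P (series l r)) (hwf : (series l r).WF)
    (hl : l.src ≠ l.tgt) : Disjoint P r.verts :=
  Set.disjoint_left.mpr fun x hx hxr => by
    obtain rfl : x = l.src := h.2.subset ⟨hx, Or.inr hxr⟩
    exact notMem_verts_of_wf_series hwf l.src_mem_verts hl hxr

lemma series_right (h : IsAttached G P (series l r)) (hwf : (series l r).WF)
    (hl : l.src ≠ l.tgt) : IsAttached G (P ∪ l.verts) r := by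
  refine ⟨fun x y hxy => ?_, ?_⟩
  · rcases h.1 x y hxy with ⟨hx, hy⟩ | he | he
    · exact Or.inl ⟨Or.inl hx, Or.inl hy⟩
    · exact Or.inl ⟨Or.inr (mem_verts_of_mem_edges he (Sym2.mem_mk_left x y)),
        Or.inr (mem_verts_of_mem_edges he (Sym2.mem_mk_right x y))⟩
    · exact Or.inr he
  · rw [Set.union_inter_distrib_right, (h.disjoint_right hwf hl).inter_eq, Set.empty_union,
      hwf.2.2.2, hwf.2.2.1]

lemma mem_iff_of_adj_of_edge {u v x y : V} (h : IsAttached G P (series (.edge u v) r))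
    (hwf : (series (.edge u v) r).WF) (hxy : G.Adj x y) (hne : s(x, y) ≠ s(u, v)) :
    x ∈ P ↔ y ∈ P := by
  have hdisj := h.disjoint_right hwf hwf.1
  rcases h.1 x y hxy with ⟨hx, hy⟩ | he | he
  · simp [hx, hy]
  · exact absurd he hne
  · simp [hdisj.notMem_of_mem_right (mem_verts_of_mem_edges he (Sym2.mem_mk_left x y)),
      hdisj.notMem_of_mem_right (mem_verts_of_mem_edges he (Sym2.mem_mk_right x y))]

lemma two_le_numComp_of_edge [Finite V] {u v : V} (h : IsAttached G P (series (.edge u v) r))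
    (hwf : (series (.edge u v) r).WF) (hr : r.src ≠ r.tgt) : 2 ≤ numComp G {v} := by
  obtain rfl : v = r.src := hwf.2.2.1
  refine two_le_numComp P (fun x y hx hy hxy => h.mem_iff_of_adj_of_edge hwf hxy ?_) h.src_mem
    hwf.1 ((h.disjoint_right hwf hwf.1).notMem_of_mem_right r.tgt_mem_verts) hr.symm
  rw [Set.mem_singleton_iff] at hx hy
  simp [hx, hy]

lemma toughness_deleteEdges_lt_half_of_edge [Finite V] {u v : V}
    (h : IsAttached G P (series (.edge u v) r)) (hwf : (series (.edge u v) r).WF) :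
    toughness (G.deleteEdges {s(u, v)}) < 1 / 2 :=
  toughness_deleteEdges_lt_half_of_separating P (fun _ _ => h.mem_iff_of_adj_of_edge hwf)
    h.src_mem ((h.disjoint_right hwf hwf.1).notMem_of_mem_right (hwf.2.2.1 ▸ r.src_mem_verts))

lemma toughness_deleteEdges_lt_half_of_r2 [Finite V] {p : SPTree V}
    (h : IsAttached G P (series p r)) (hp : IsR2 p) (hwf : (series p r).WF)
    (hr : r.src ≠ r.tgt) (hw : ∃ w ∈ P, w ≠ p.src) {e : Sym2 V} (he : e ∈ p.edges) :
    toughness (G.deleteEdges {e}) < 1 / 2 := by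
  obtain ⟨s, a, b, t, rfl, hsa, hsb, hst, hab, hat, hbt⟩ := hp.exists_eq hwf.1
  obtain ⟨w, hwP, hws⟩ := hw
  have hmid : ∀ x ∈ ({a, b} : Set V), x ∉ P ∪ r.verts := by
    rintro x hx (hxP | hxr)
    · have : x = s := h.2.subset ⟨hxP, Or.inl (by simp [verts]; grind)⟩
      grind
    · exact notMem_verts_of_wf_series hwf (by simp [verts]; grind) (by simp [tgt]; grind) hxr
  have hE : (SPTree.parallel ((SPTree.edge s a).series (SPTree.edge a t))
      ((SPTree.edge s b).series (SPTree.edge b t))).edges =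
      {s(s, a), s(a, t), s(s, b), s(b, t)} := by
    ext; simp only [edges, Set.mem_union, Set.mem_singleton_iff, Set.mem_insert_iff]; tauto
  have hdisj := h.disjoint_right hwf hst
  obtain rfl : t = r.src := hwf.2.2.1
  refine toughness_deleteEdges_lt_half_of_fourCycle hdisj (hmid a (by simp)) (hmid b (by simp))
    hab h.src_mem hwP hws r.src_mem_verts r.tgt_mem_verts hr.symm (fun x y hxy => ?_) (hE ▸ he)
  rcases h.1 x y hxy with hP | hp | hr
  · exact Or.inl hP
  · exact Or.inr (Or.inr (hE ▸ hp))
  · exact Or.inr (Or.inl ⟨mem_verts_of_mem_edges hr (Sym2.mem_mk_left x y),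
      mem_verts_of_mem_edges hr (Sym2.mem_mk_right x y)⟩)

end IsAttached

theorem NeckTail.toughness_deleteEdges_lt_half [Finite V] {t : SPTree V} (ht : NeckTail t)
    (hwf : t.WF) {G : SimpleGraph V} {P : Set V} (hG : IsAttached G P t)
    (hw : ∃ w ∈ P, w ≠ t.src) {e : Sym2 V} (he : e ∈ t.edges) :
    toughness (G.deleteEdges {e}) < 1 / 2 := by
  induction ht generalizing P with
  | base u v =>
    obtain rfl : e = s(u, v) := he
    have hvP : v ∉ P := fun h => hwf (hG.2.subset ⟨h, Or.inr rfl⟩).symm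
    refine toughness_deleteEdges_lt_half_of_separating P (fun x y hxy hne => ?_) hG.src_mem hvP
    rcases hG.1 x y hxy with ⟨hx, hy⟩ | he
    · simp [hx, hy]
    · exact absurd he hne
  | @consEdge u v r hr ih =>
    rcases he with rfl | he
    · exact hG.toughness_deleteEdges_lt_half_of_edge hwf
    · exact ih hwf.2.1 (hG.series_right hwf hwf.1) ⟨u, Or.inr (Or.inl rfl), hwf.2.2.1 ▸ hwf.1⟩ he
  | @consR2 p r hp hr ih =>
    have hps : p.src ≠ p.tgt := by
      obtain ⟨s, a, b, t, rfl, -, -, hst, -⟩ := hp.exists_eq hwf.1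
      exact hst
    rcases he with he | he
    · exact hG.toughness_deleteEdges_lt_half_of_r2 hp hwf (hr.src_ne_tgt hwf.2.1) hw he
    · exact ih hwf.2.1 (hG.series_right hwf hps) ⟨p.src, Or.inr p.src_mem_verts,
        hwf.2.2.1 ▸ hps⟩ he

end Necklace

/-- Every necklace graph is minimally 1/2-tough. -/
theorem necklace_minTough {V : Type*} [Fintype V]
    (G : SimpleGraph V) (T : SPTree V) (hrep : RepresentsSP G T)
    (hneck : IsNecklaceTree T) :
    MinTough G (1 / 2) := by
  classical
  obtain ⟨hwf, hverts, rfl⟩ := hrep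
  obtain ⟨v₀, v₁, tl, rfl, htl⟩ := hneck
  have hA : IsAttached _ {v₀} (.series (.edge v₀ v₁) tl) :=
    ⟨fun x y h => Or.inr ((fromEdgeSet_adj _).mp h).1, by rw [hverts, Set.inter_univ]; rfl⟩
  have hcut := hA.two_le_numComp_of_edge hwf (htl.src_ne_tgt hwf.2.1)
  refine ⟨le_antisymm ?_ ?_, fun e he => ?_⟩
  · refine (toughness_le_div hcut).trans ?_
    rw [Set.ncard_singleton, Nat.cast_one]
    gcongr
    exact_mod_cast hcut
  · obtain ⟨p, hmem, -, hcnt⟩ := (NeckTail.consEdge v₀ v₁ htl).hasClosedTwoWalk hwf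
    simpa using one_div_le_toughness_of_closedWalk p
      (fun x => (hmem x).mpr (hverts ▸ Set.mem_univ x)) hcnt ⟨{v₁}, hcut⟩
  · rcases (edgeSet_fromEdgeSet _ ▸ he).1 with rfl | he
    · exact hA.toughness_deleteEdges_lt_half_of_edge hwf
    · exact htl.toughness_deleteEdges_lt_half hwf.2.1 (hA.series_right hwf hwf.1)
        ⟨v₀, by simp, hwf.2.2.1 ▸ hwf.1⟩ he
end

section
/- If a series-parallel graph G contains Q₂ (the parallel join of a length-2 path and a single edge, i.e., a triangle with terminals s₁, t₁ and middle vertex v₁) as a substructure of its sp-decomposition, then G is not minimally 1/2-tough. -/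
open SimpleGraph

/-!
Deleting the edge `s₁t₁` keeps the toughness at least `1/2`, contradicting minimality. Let `S` be
a cutset of `G - s₁t₁`. If `S` contains `s₁` or `t₁`, or misses `v₁` (so that the path `s₁v₁t₁`
survives), then `G - s₁t₁ - S` and `G - S` have the same components. Otherwise `v₁ ∈ S` and
`s₁, t₁ ∉ S`: deleting an edge creates at most one new component, and `S \ {v₁}` leaves as many
components of `G` as `S` does, since `v₁` only reattaches to the component containing `s₁t₁`.
Hence `c(G - s₁t₁ - S) ≤ 2 (|S| - 1) + 1` if `S \ {v₁}` is a cutset of `G`, and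
`c(G - s₁t₁ - S) ≤ 2 ≤ 2 |S|` otherwise.
-/

open Function

namespace SimpleGraph

variable {V W : Type*} {G : SimpleGraph V} {H : SimpleGraph W}

theorem Reachable.of_forall_adj_reachable (f : V → W)
    (hf : ∀ x y, G.Adj x y → H.Reachable (f x) (f y)) {u v : V} (h : G.Reachable u v) :
    H.Reachable (f u) (f v) := by
  rw [reachable_iff_reflTransGen] at h ⊢
  exact h.lift' f fun x y hxy => (reachable_iff_reflTransGen _ _).mp (hf x y hxy)

theorem ConnectedComponent.map_injective_of_leftInverse (φ : H →g G) (r : V → W)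
    (hr : LeftInverse r φ) (hf : ∀ x y, G.Adj x y → H.Reachable (r x) (r y)) :
    Injective (ConnectedComponent.map φ) := by
  intro c d hcd
  induction c using ConnectedComponent.ind
  induction d using ConnectedComponent.ind
  rw [ConnectedComponent.map_mk, ConnectedComponent.map_mk, ConnectedComponent.eq] at hcd
  simpa only [ConnectedComponent.eq, hr _] using hcd.of_forall_adj_reachable r hf

theorem ConnectedComponent.card_eq_of_le_of_forall_adj_reachable [Finite V] {G' : SimpleGraph V}
    (h : G ≤ G') (h' : ∀ x y, G'.Adj x y → G.Reachable x y) :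
    Nat.card G.ConnectedComponent = Nat.card G'.ConnectedComponent :=
  le_antisymm (Nat.card_le_card_of_injective _ <|
      map_injective_of_leftInverse (Hom.ofLE h) id (fun _ => rfl) h')
    (card_le_card_of_le h)

theorem ConnectedComponent.card_le_card_sup_edge_add_one [Finite V] (G : SimpleGraph V)
    (a b : V) : Nat.card G.ConnectedComponent ≤ Nat.card (G ⊔ edge a b).ConnectedComponent + 1 := by
  classical
  -- contracting the component of `b` onto `a` turns `(G ⊔ edge a b)`-walks into `G`-walks
  let r : V → V := fun x => if G.Reachable x b then a else x
  have hr : ∀ x y, (G ⊔ edge a b).Adj x y → G.Reachable (r x) (r y) := by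
    intro x y hxy
    rcases hxy with hxy | hxy
    · have hiff : G.Reachable x b ↔ G.Reachable y b :=
        ⟨hxy.symm.reachable.trans, hxy.reachable.trans⟩
      by_cases hx : G.Reachable x b
      · simp [r, hx, hiff.mp hx]
      · simp only [r, hx, hiff.not.mp hx, if_false]
        exact hxy.reachable
    · rw [edge_adj] at hxy
      rcases hxy with ⟨⟨rfl, rfl⟩ | ⟨rfl, rfl⟩, -⟩ <;> simp [r]
  let g : G.ConnectedComponent → Option (G ⊔ edge a b).ConnectedComponent := fun c =>
    if c = G.connectedComponentMk b then none else some (c.map (Hom.ofLE le_sup_left))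
  have hg : Injective g := by
    intro c d hcd
    induction c using ConnectedComponent.ind with | h u => ?_
    induction d using ConnectedComponent.ind with | h v => ?_
    by_cases hu : G.connectedComponentMk u = G.connectedComponentMk b <;>
      by_cases hv : G.connectedComponentMk v = G.connectedComponentMk b <;>
      simp only [g, hu, hv, if_true, if_false, reduceCtorEq, Option.some.injEq] at hcd
    · exact hu.trans hv.symm
    · rw [ConnectedComponent.map_mk, ConnectedComponent.map_mk, ConnectedComponent.eq] at hcd
      rw [ConnectedComponent.eq] at hu hv ⊢
      simpa [r, hu, hv] using hcd.of_forall_adj_reachable r hr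
  simpa using Nat.card_le_card_of_injective g hg

end SimpleGraph

section NumComp

variable {V : Type*} {G H : SimpleGraph V} {S : Set V}

theorem IsCutset.mono [Finite V] (hS : IsCutset G S) (h : H ≤ G) : IsCutset H S :=
  hS.trans_le (ConnectedComponent.card_le_card_of_le fun _ _ hxy => h hxy)

theorem numComp_deleteEdges_of_mem_s17 {a b : V} (h : a ∈ S ∨ b ∈ S) :
    numComp (G.deleteEdges {s(a, b)}) S = numComp G S := by
  have : (G.deleteEdges {s(a, b)}).induce Sᶜ = G.induce Sᶜ := by
    ext x y
    simp only [comap_adj, Embedding.subtype_apply, deleteEdges_adj,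
      Set.mem_singleton_iff, Sym2.eq_iff, and_iff_left_iff_imp]
    have := x.2
    have := y.2
    grind
  rw [numComp, numComp, this]

theorem numComp_deleteEdges_le_succ [Finite V] (G : SimpleGraph V) (a b : V) (S : Set V) :
    numComp (G.deleteEdges {s(a, b)}) S ≤ numComp G S + 1 := by
  by_cases h : a ∈ S ∨ b ∈ S
  · rw [numComp_deleteEdges_of_mem_s17 h]
    omega
  obtain ⟨ha, hb⟩ := not_or.mp h
  refine (ConnectedComponent.card_le_card_sup_edge_add_one _ ⟨a, ha⟩ ⟨b, hb⟩).trans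
    (Nat.add_le_add_right (ConnectedComponent.card_le_card_of_le ?_) 1)
  intro x y hxy
  by_cases hxy' : s((x : V), (y : V)) = s(a, b)
  · right
    rw [edge_adj]
    refine ⟨?_, hxy.ne⟩
    simpa [Sym2.eq_iff, Subtype.ext_iff] using hxy'
  · exact Or.inl (deleteEdges_adj.mpr ⟨hxy, hxy'⟩)

theorem numComp_deleteEdges_of_adj_of_adj [Finite V] {a b c : V} (hc : c ∉ S) (hac : G.Adj a c)
    (hcb : G.Adj c b) : numComp (G.deleteEdges {s(a, b)}) S = numComp G S := by
  refine ConnectedComponent.card_eq_of_le_of_forall_adj_reachable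
    (fun _ _ hxy => (deleteEdges_adj.mp hxy).1) fun x y hxy => ?_
  by_cases hxy' : s((x : V), (y : V)) = s(a, b)
  · let z : ↥Sᶜ := ⟨c, hc⟩
    rcases Sym2.eq_iff.mp hxy' with ⟨rfl, rfl⟩ | ⟨rfl, rfl⟩
    · have hxz : ((G.deleteEdges {s((x : V), y)}).induce Sᶜ).Adj x z :=
        deleteEdges_adj.mpr ⟨hac, fun h => hcb.ne (Sym2.congr_right.mp h)⟩
      have hzy : ((G.deleteEdges {s((x : V), y)}).induce Sᶜ).Adj z y :=
        deleteEdges_adj.mpr ⟨hcb, fun h => hac.ne' (Sym2.congr_left.mp h)⟩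
      exact hxz.reachable.trans hzy.reachable
    · have hxz : ((G.deleteEdges {s((y : V), x)}).induce Sᶜ).Adj x z :=
        deleteEdges_adj.mpr
          ⟨hcb.symm, fun h => hac.ne' (Sym2.congr_right.mp (h.trans Sym2.eq_swap))⟩
      have hzy : ((G.deleteEdges {s((y : V), x)}).induce Sᶜ).Adj z y :=
        deleteEdges_adj.mpr
          ⟨hac.symm, fun h => hcb.ne (Sym2.congr_left.mp (h.trans Sym2.eq_swap))⟩
      exact hxz.reachable.trans hzy.reachable
  · exact Adj.reachable (deleteEdges_adj.mpr ⟨hxy, hxy'⟩)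

theorem numComp_diff_singleton_eq {v a : V} (ha : a ∉ S) (hva : G.Adj v a)
    (hnbr : ∀ w (hw : w ∉ S), G.Adj v w → (G.induce Sᶜ).Reachable ⟨a, ha⟩ ⟨w, hw⟩) :
    numComp G (S \ {v}) = numComp G S := by
  classical
  have hsub : Sᶜ ⊆ (S \ {v})ᶜ := fun x hx hx' => hx hx'.1
  have heq_v : ∀ x : ↥(S \ {v})ᶜ, (x : V) ∈ S → (x : V) = v :=
    fun x hx => by_contra fun hxv => x.2 ⟨hx, hxv⟩
  let φ := (G.induceHomOfLE hsub).toHom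
  -- retract `v` onto its neighbour `a`
  let r : ↥(S \ {v})ᶜ → ↥Sᶜ := fun x => if hx : (x : V) ∈ S then ⟨a, ha⟩ else ⟨x, hx⟩
  have hr : LeftInverse r φ := fun x => dif_neg x.2
  have hrv : ∀ x y : ↥(S \ {v})ᶜ, (x : V) ∈ S → (y : V) ∉ S → G.Adj x y →
      (G.induce Sᶜ).Reachable (r x) (r y) := by
    intro x y hx hy hxy
    simp only [r, dif_pos hx, dif_neg hy]
    have hvy : G.Adj x y := hxy
    rw [heq_v x hx] at hvy
    exact hnbr y hy hvy
  have hradj : ∀ x y, (G.induce (S \ {v})ᶜ).Adj x y → (G.induce Sᶜ).Reachable (r x) (r y) := by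
    intro x y hxy
    by_cases hx : (x : V) ∈ S <;> by_cases hy : (y : V) ∈ S
    · exact absurd ((heq_v x hx).trans (heq_v y hy).symm) (G.ne_of_adj hxy)
    · exact hrv x y hx hy hxy
    · exact (hrv y x hy hx hxy.symm).symm
    · simp only [r, dif_neg hx, dif_neg hy]
      exact Adj.reachable hxy
  have hsurj : Surjective (ConnectedComponent.map φ) := by
    intro c
    induction c using ConnectedComponent.ind with | h x => ?_
    by_cases hx : (x : V) ∈ S
    · refine ⟨(G.induce Sᶜ).connectedComponentMk ⟨a, ha⟩, ?_⟩
      rw [ConnectedComponent.map_mk]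
      refine ConnectedComponent.connectedComponentMk_eq_of_adj ?_
      show G.Adj a x
      rw [heq_v x hx]
      exact hva.symm
    · exact ⟨(G.induce Sᶜ).connectedComponentMk ⟨x, hx⟩, rfl⟩
  exact (Nat.card_eq_of_bijective _
    ⟨ConnectedComponent.map_injective_of_leftInverse φ r hr hradj, hsurj⟩).symm

end NumComp

section Toughness

variable {V : Type*} {G : SimpleGraph V} {S : Set V}

theorem IsCutset.numComp_pos (hS : IsCutset G S) : (0 : ℝ) < numComp G S := by
  have : 0 < numComp G S := Nat.zero_lt_of_lt hS
  exact_mod_cast this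

theorem IsCutset.toughness_mul_numComp_le (hS : IsCutset G S) :
    toughness G * numComp G S ≤ S.ncard := by
  have hbdd : BddBelow {r : ℝ | ∃ S : Set V, IsCutset G S ∧ r = S.ncard / numComp G S} :=
    ⟨0, by rintro r ⟨T, -, rfl⟩; positivity⟩
  rw [← le_div_iff₀ hS.numComp_pos]
  exact csInf_le hbdd ⟨S, hS, rfl⟩

theorem IsCutset.le_toughness {t : ℝ} (hS : IsCutset G S)
    (h : ∀ T, IsCutset G T → t * numComp G T ≤ T.ncard) : t ≤ toughness G := by
  refine le_csInf ⟨_, S, hS, rfl⟩ ?_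
  rintro r ⟨T, hT, rfl⟩
  rw [le_div_iff₀ hT.numComp_pos]
  exact h T hT

theorem exists_isCutset_of_toughness_ne_zero (h : toughness G ≠ 0) : ∃ S, IsCutset G S := by
  by_contra! hno
  refine h ?_
  simp [toughness, hno]

end Toughness

theorem numComp_deleteEdges_le_two_mul_ncard {V : Type*} [Finite V] {G : SimpleGraph V}
    {S : Set V} {a b v : V} (hab : G.Adj a b) (hnb : G.neighborSet v = {a, b})
    (hG : ∀ T, IsCutset G T → numComp G T ≤ 2 * T.ncard)
    (hS : IsCutset (G.deleteEdges {s(a, b)}) S) :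
    numComp (G.deleteEdges {s(a, b)}) S ≤ 2 * S.ncard := by
  have hva : G.Adj v a := by simp [← mem_neighborSet, hnb]
  have hvb : G.Adj v b := by simp [← mem_neighborSet, hnb]
  by_cases hvS : v ∈ S
  · by_cases habS : a ∈ S ∨ b ∈ S
    · rw [IsCutset, numComp_deleteEdges_of_mem_s17 habS] at hS
      rw [numComp_deleteEdges_of_mem_s17 habS]
      exact hG S hS
    obtain ⟨ha, hb⟩ := not_or.mp habS
    have hdiff : numComp G (S \ {v}) = numComp G S := by
      refine numComp_diff_singleton_eq ha hva fun w hw hvw => ?_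
      rcases (show w ∈ ({a, b} : Set V) from hnb ▸ hvw) with rfl | rfl
      · rfl
      · exact Adj.reachable hab
    have hcard := Set.ncard_sdiff_singleton_add_one hvS
    have hsucc := numComp_deleteEdges_le_succ G a b S
    by_cases hcut : IsCutset G (S \ {v})
    · have := hG _ hcut
      omega
    · rw [IsCutset, hdiff] at hcut
      omega
  · rw [IsCutset, numComp_deleteEdges_of_adj_of_adj hvS hva.symm hvb] at hS
    rw [numComp_deleteEdges_of_adj_of_adj hvS hva.symm hvb]
    exact hG S hS

theorem not_minTough_of_Q2_general {V : Type*} [Fintype V]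
    (G : SimpleGraph V)
    (s₁ t₁ v₁ : V) (hadj : G.Adj s₁ t₁)
    (hnb : G.neighborSet v₁ = {s₁, t₁}) :
    ¬ MinTough G (1 / 2) := by
  rintro ⟨htough, hmin⟩
  obtain ⟨S₀, hS₀⟩ := exists_isCutset_of_toughness_ne_zero (G := G) (by norm_num [htough])
  have hG : ∀ T, IsCutset G T → numComp G T ≤ 2 * T.ncard := fun T hT => by
    have := hT.toughness_mul_numComp_le
    rw [htough] at this
    exact_mod_cast (by linarith : (numComp G T : ℝ) ≤ 2 * T.ncard)
  have hhalf : 1 / 2 ≤ toughness (G.deleteEdges {s(s₁, t₁)}) :=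
    (hS₀.mono (deleteEdges_le _)).le_toughness fun T hT => by
      have : (numComp (G.deleteEdges {s(s₁, t₁)}) T : ℝ) ≤ 2 * T.ncard :=
        by exact_mod_cast numComp_deleteEdges_le_two_mul_ncard hadj hnb hG hT
      linarith
  exact (hmin _ hadj).not_ge hhalf

/-- If a series-parallel graph `G` contains `Q₂` as a substructure, i.e. a triangle
`s₁, v₁, t₁` in which the middle vertex `v₁` has degree 2 (neighborhood exactly `{s₁, t₁}`)
and `s₁t₁` is an edge, then `G` is not minimally 1/2-tough. -/
theorem not_minTough_of_Q2 {V : Type*} [Fintype V]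
    (G : SimpleGraph V) (hsp : IsSPGraph G)
    (s₁ t₁ v₁ : V) (hadj : G.Adj s₁ t₁)
    (hnb : G.neighborSet v₁ = {s₁, t₁}) :
    ¬ MinTough G (1 / 2) :=
  not_minTough_of_Q2_general G s₁ t₁ v₁ hadj hnb
end
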